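/- arXiv:2111.07323 — 2 statements merged into one kernel-verified Lean document; each statement's English description precedes it below -/
import Mathlib

section
/- Let p ≥ 1, t ∈ (1,2], and let n be a positive integer. Then Γ_{⌊t^n⌋}(Kₙ^p) ≤ (n/(n + l(n,t)))^{1/p} ≤ (n/(n + ⌊b(t)·n⌋))^{1/p}. -/
/-!
For `x ∈ Kₙ^p` put `N = n + l` and round the numbers `N |xᵢ|^p` (whose sum is at most `N`) down to
integers `kᵢ` with `∑ kᵢ ≤ l`, losing at most `n` in total. The centre `cᵢ = ±(kᵢ/N)^(1/p)`, with
the sign of `xᵢ`, then satisfies `|xᵢ - cᵢ|^p ≤ |xᵢ|^p - kᵢ/N` because `(a^(1/p) - b^(1/p))^p ≤ a - b`,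
so `x - c ∈ (n/N)^(1/p) Kₙ^p`. The centres are indexed by `k` in the `l`-simplex and a sign for
each nonzero `kᵢ`, hence there are at most `2^l C(n+l,n) ≤ ⌊tⁿ⌋` of them.

For the second inequality, the binomial theorem gives `2^k C(n+k,n) ≤ g(b)ⁿ = tⁿ` for `k = ⌊bn⌋`,
and `k ↦ 2^k C(n+k,n)` is monotone, so the defining inequality of `l` forces `k ≤ l`.
-/

open Real Set Pointwise

/-- The covering functional `Γ_m(K)`: the infimum of all `γ > 0` such that `K` can be
covered by `m` translates of `γ • K`. -/
noncomputable def coveringFunctional {n : ℕ} (m : ℕ) (K : Set (Fin n → ℝ)) : ℝ :=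
  sInf {γ : ℝ | 0 < γ ∧ ∃ C : Set (Fin n → ℝ), C.Finite ∧ C.ncard = m ∧ K ⊆ C + γ • K}

/-- `Kₙ^p`: the unit ball of `ℓ_p^n`. -/
noncomputable def Kp (n : ℕ) (p : ℝ) : Set (Fin n → ℝ) :=
  {x | (∑ i, |x i| ^ p) ≤ 1}

/-- `g x = 2^x * (1+x)^(1+x) / x^x` (real powers). -/
noncomputable def g (x : ℝ) : ℝ := 2 ^ x * (1 + x) ^ (1 + x) / x ^ x

open Finset

lemma rpow_one_div_sub_rpow_one_div_rpow_le {p a b : ℝ} (hp : 1 ≤ p) (hb : 0 ≤ b) (hba : b ≤ a) :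
    (a ^ (1 / p) - b ^ (1 / p)) ^ p ≤ a - b := by
  have hp0 : 0 < p := one_pos.trans_le hp
  have hq0 : 0 ≤ 1 / p := by positivity
  have hq1 : 1 / p ≤ 1 := (div_le_one hp0).2 hp
  have hsub : a ^ (1 / p) - b ^ (1 / p) ≤ (a - b) ^ (1 / p) := by
    have := Real.rpow_add_le_add_rpow (sub_nonneg.2 hba) hb hq0 hq1
    rw [sub_add_cancel] at this
    linarith
  calc (a ^ (1 / p) - b ^ (1 / p)) ^ p ≤ ((a - b) ^ (1 / p)) ^ p :=
        rpow_le_rpow (sub_nonneg.2 (rpow_le_rpow hb hba hq0)) hsub hp0.le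
    _ = a - b := by rw [← rpow_mul (sub_nonneg.2 hba), one_div_mul_cancel hp0.ne', rpow_one]

lemma abs_sub_ite_neg {x β : ℝ} (h : β ≤ |x|) :
    |x - (if x < 0 then -β else β)| = |x| - β := by
  split_ifs with hx
  · rw [abs_of_neg hx] at h ⊢
    rw [abs_of_nonpos (by linarith)]
    ring
  · rw [abs_of_nonneg (not_lt.1 hx)] at h ⊢
    rw [abs_of_nonneg (by linarith)]

lemma abs_sub_ite_neg_rpow_le {p x a : ℝ} (hp : 1 ≤ p) (ha : 0 ≤ a) (hax : a ≤ |x| ^ p) :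
    |x - (if x < 0 then -a ^ (1 / p) else a ^ (1 / p))| ^ p ≤ |x| ^ p - a := by
  have hp0 : 0 < p := one_pos.trans_le hp
  have hroot : (|x| ^ p) ^ (1 / p) = |x| := by
    rw [← rpow_mul (abs_nonneg x), mul_one_div_cancel hp0.ne', rpow_one]
  have hle : a ^ (1 / p) ≤ |x| := hroot ▸ rpow_le_rpow ha hax (by positivity)
  rw [abs_sub_ite_neg hle]
  simpa only [hroot] using rpow_one_div_sub_rpow_one_div_rpow_le hp ha hax

lemma exists_le_sum_eq {ι : Type*} [Fintype ι] [DecidableEq ι] (f : ι → ℕ) {s : ℕ}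
    (hs : s ≤ ∑ i, f i) : ∃ d ≤ f, ∑ i, d i = s := by
  induction s with
  | zero => exact ⟨0, fun i => Nat.zero_le _, by simp⟩
  | succ s ih =>
    obtain ⟨d, hdf, hd⟩ := ih (by omega)
    obtain ⟨j, -, hj⟩ := exists_lt_of_sum_lt (hd.trans_lt hs)
    refine ⟨d + Pi.single j 1, fun i => ?_, by simp [sum_add_distrib, hd]⟩
    rcases eq_or_ne i j with rfl | hij
    · simpa using hj
    · simpa [hij] using hdf i

lemma exists_nat_le_of_sum_le {ι : Type*} [Fintype ι] {z : ι → ℝ} (hz : ∀ i, 0 ≤ z i) {l : ℕ}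
    (hsum : ∑ i, z i ≤ Fintype.card ι + l) :
    ∃ k : ι → ℕ, (∀ i, (k i : ℝ) ≤ z i) ∧ ∑ i, k i ≤ l ∧ ∑ i, (z i - k i) ≤ Fintype.card ι := by
  classical
  obtain ⟨k, hk, hksum⟩ := exists_le_sum_eq (fun i => ⌊z i⌋₊) (min_le_right l _)
  refine ⟨k, fun i => (Nat.cast_le.2 (hk i)).trans (Nat.floor_le (hz i)),
    hksum ▸ min_le_left _ _, ?_⟩
  rw [sum_sub_distrib, ← Nat.cast_sum, hksum]
  rcases min_cases l (∑ i, ⌊z i⌋₊) with ⟨h, -⟩ | ⟨h, -⟩ <;> rw [h]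
  · linarith
  · rw [Nat.cast_sum, ← sum_sub_distrib]
    calc ∑ i, (z i - ⌊z i⌋₊) ≤ ∑ _i : ι, (1 : ℝ) :=
          sum_le_sum fun i _ => by linarith [Nat.lt_floor_add_one (z i)]
      _ = Fintype.card ι := by simp

def simplexLatticePoints (n l : ℕ) : Finset (Fin n → ℕ) :=
  {k ∈ Fintype.piFinset fun _ => range (l + 1) | ∑ i, k i ≤ l}

lemma mem_simplexLatticePoints {n l : ℕ} {k : Fin n → ℕ} :
    k ∈ simplexLatticePoints n l ↔ ∑ i, k i ≤ l := by
  refine mem_filter.trans ⟨And.right, fun h => ⟨Fintype.mem_piFinset.2 fun i => ?_, h⟩⟩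
  exact mem_range_succ_iff.2 ((single_le_sum (fun j _ => Nat.zero_le (k j)) (mem_univ i)).trans h)

lemma card_simplexLatticePoints_le (n l : ℕ) :
    #(simplexLatticePoints n l) ≤ (n + l).choose n := by
  -- appending the slack `l - ∑ kᵢ` turns `k` into a point of `Fin (n + 1) →₀ ℕ` with sum exactly `l`
  have hsub : simplexLatticePoints n l ⊆
      (univ.finsuppAntidiag l).image fun (f : Fin (n + 1) →₀ ℕ) i => f (Fin.castSucc i) := by
    intro k hk
    refine mem_image.2 ⟨Finsupp.equivFunOnFinite.symm (Fin.snoc k (l - ∑ i, k i)), ?_, ?_⟩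
    · have hkl := mem_simplexLatticePoints.1 hk
      simp only [mem_finsuppAntidiag, Finsupp.equivFunOnFinite_symm_apply_apply,
        Fin.sum_univ_castSucc, Fin.snoc_castSucc, Fin.snoc_last,
        Finsupp.equivFunOnFinite_symm_apply_support, Finset.subset_univ, and_true]
      omega
    · funext i
      simp
  calc #(simplexLatticePoints n l) ≤ #(univ.finsuppAntidiag l : Finset (Fin (n + 1) →₀ ℕ)) :=
        (Finset.card_le_card hsub).trans card_image_le
    _ = (n + l).choose n := by
      rw [card_finsuppAntidiag_nat_eq_choose, card_univ, Fintype.card_fin,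
        show n + 1 + l - 1 = n + l by omega, Nat.choose_symm_add]

lemma card_pair_neg_le {r : ℕ → ℝ} (hr : r 0 = 0) (j : ℕ) : #({r j, -r j} : Finset ℝ) ≤ 2 ^ j := by
  rcases j with _ | j
  · simp [hr]
  · exact card_le_two.trans (Nat.le_self_pow (by omega) 2)

noncomputable def signedCentres (r : ℕ → ℝ) (n l : ℕ) : Finset (Fin n → ℝ) :=
  (simplexLatticePoints n l).biUnion fun k => Fintype.piFinset fun i => {r (k i), -r (k i)}

lemma card_signedCentres_le {r : ℕ → ℝ} (hr : r 0 = 0) (n l : ℕ) :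
    #(signedCentres r n l) ≤ 2 ^ l * (n + l).choose n := by
  have hfibre : ∀ k ∈ simplexLatticePoints n l,
      #(Fintype.piFinset fun i => ({r (k i), -r (k i)} : Finset ℝ)) ≤ 2 ^ l := by
    intro k hk
    calc #(Fintype.piFinset fun i => ({r (k i), -r (k i)} : Finset ℝ))
        ≤ ∏ i, 2 ^ k i := by
          rw [Fintype.card_piFinset]
          exact prod_le_prod (fun _ _ => Nat.zero_le _) fun i _ => card_pair_neg_le hr (k i)
      _ = 2 ^ ∑ i, k i := prod_pow_eq_pow_sum _ _ _
      _ ≤ 2 ^ l := Nat.pow_le_pow_right two_pos (mem_simplexLatticePoints.1 hk)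
  calc #(signedCentres r n l) ≤ ∑ k ∈ simplexLatticePoints n l, 2 ^ l :=
        card_biUnion_le.trans (sum_le_sum hfibre)
    _ = #(simplexLatticePoints n l) * 2 ^ l := sum_const_nat fun _ _ => rfl
    _ ≤ 2 ^ l * (n + l).choose n := by
      rw [mul_comm]
      exact Nat.mul_le_mul_left _ (card_simplexLatticePoints_le n l)

lemma exists_mem_signedCentres_sum_rpow_le {n : ℕ} (hn : 0 < n) (l : ℕ) {p : ℝ} (hp : 1 ≤ p)
    {x : Fin n → ℝ} (hx : x ∈ Kp n p) :
    ∃ c ∈ signedCentres (fun j => (j / (n + l : ℝ)) ^ (1 / p)) n l,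
      ∑ i, |x i - c i| ^ p ≤ n / (n + l) := by
  set N : ℝ := n + l
  have hN : 0 < N := by positivity
  obtain ⟨k, hkz, hkl, hloss⟩ := exists_nat_le_of_sum_le (z := fun i => N * |x i| ^ p)
    (fun i => by positivity) (l := l) (by
      rw [← mul_sum, Fintype.card_fin]
      exact mul_le_of_le_one_right hN.le hx)
  have hkN : ∀ i, (k i : ℝ) / N ≤ |x i| ^ p := fun i => (div_le_iff₀' hN).2 (hkz i)
  refine ⟨fun i => if x i < 0 then -((k i : ℝ) / N) ^ (1 / p) else ((k i : ℝ) / N) ^ (1 / p),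
    mem_biUnion.2 ⟨k, mem_simplexLatticePoints.2 hkl, Fintype.mem_piFinset.2 fun i => ?_⟩, ?_⟩
  · split_ifs <;> simp
  calc ∑ i, |x i - (if x i < 0 then -((k i : ℝ) / N) ^ (1 / p) else ((k i : ℝ) / N) ^ (1 / p))| ^ p
      ≤ ∑ i, (|x i| ^ p - k i / N) :=
        sum_le_sum fun i _ => abs_sub_ite_neg_rpow_le hp (by positivity) (hkN i)
    _ = (∑ i, (N * |x i| ^ p - k i)) / N := by
        rw [sum_div]
        exact sum_congr rfl fun i _ => by field_simp
    _ ≤ n / N := by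
        gcongr
        simpa using hloss

lemma mem_smul_Kp_of_sum_rpow_le {n : ℕ} {p γ : ℝ} (hγ : 0 < γ) {z : Fin n → ℝ}
    (hz : ∑ i, |z i| ^ p ≤ γ ^ p) : z ∈ γ • Kp n p := by
  rw [mem_smul_set_iff_inv_smul_mem₀ hγ.ne']
  show ∑ i, |γ⁻¹ * z i| ^ p ≤ 1
  simp_rw [abs_mul, mul_rpow (abs_nonneg _) (abs_nonneg _), ← mul_sum, abs_inv, abs_of_pos hγ,
    inv_rpow hγ.le]
  exact inv_mul_le_one_of_le₀ hz (by positivity)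

lemma Kp_subset_signedCentres_add {n : ℕ} (hn : 0 < n) (l : ℕ) {p : ℝ} (hp : 1 ≤ p) :
    Kp n p ⊆ ↑(signedCentres (fun j => (j / (n + l : ℝ)) ^ (1 / p)) n l) +
      ((n : ℝ) / (n + l)) ^ (1 / p) • Kp n p := by
  have hp0 : 0 < p := one_pos.trans_le hp
  intro x hx
  obtain ⟨c, hc, hxc⟩ := exists_mem_signedCentres_sum_rpow_le hn l hp hx
  refine ⟨c, hc, x - c, mem_smul_Kp_of_sum_rpow_le (by positivity) ?_, add_sub_cancel c x⟩
  rwa [← rpow_mul (by positivity), one_div_mul_cancel hp0.ne', rpow_one]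

lemma coveringFunctional_le_of_subset_add {n m : ℕ} [Nonempty (Fin n)] {K : Set (Fin n → ℝ)}
    {γ : ℝ} (hγ : 0 < γ) (C : Finset (Fin n → ℝ)) (hCm : #C ≤ m) (hK : K ⊆ ↑C + γ • K) :
    coveringFunctional m K ≤ γ := by
  obtain ⟨C', hCC', hC'⟩ := Infinite.exists_superset_card_eq C m hCm
  refine csInf_le ⟨0, fun _ h => h.1.le⟩ ⟨hγ, C', C'.finite_toSet, by rw [ncard_coe_finset, hC'], ?_⟩
  exact hK.trans (add_subset_add_right (coe_subset.2 hCC'))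

lemma choose_mul_pow_le_one_add_pow {b : ℝ} (hb : 0 ≤ b) (m k : ℕ) :
    (m.choose k : ℝ) * b ^ k ≤ (1 + b) ^ m := by
  rcases le_or_gt k m with hkm | hmk
  · rw [add_comm, add_pow]
    simp only [one_pow, mul_one]
    calc (m.choose k : ℝ) * b ^ k = b ^ k * m.choose k := mul_comm _ _
      _ ≤ ∑ j ∈ range (m + 1), b ^ j * m.choose j :=
        single_le_sum (f := fun j => b ^ j * (m.choose j : ℝ)) (fun _ _ => by positivity)
          (mem_range_succ_iff.2 hkm)
  · rw [Nat.choose_eq_zero_of_lt hmk, Nat.cast_zero, zero_mul]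
    positivity

lemma g_eq_mul_rpow {b : ℝ} (hb : 0 < b) : g b = (1 + b) * (2 * (1 + b) / b) ^ b := by
  rw [g, div_rpow (by positivity) hb.le, mul_rpow zero_le_two (by positivity),
    rpow_add (by positivity), rpow_one]
  field_simp

lemma two_pow_mul_choose_le_g_pow {b : ℝ} (hb : 0 < b) {n k : ℕ} (hk : (k : ℝ) ≤ b * n) :
    2 ^ k * ((n + k).choose n : ℝ) ≤ g b ^ n := by
  set q := 2 * (1 + b) / b
  have hq : 1 ≤ q := by
    rw [le_div_iff₀ hb]
    linarith
  calc 2 ^ k * ((n + k).choose n : ℝ) ≤ 2 ^ k * ((1 + b) ^ (n + k) / b ^ k) := by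
        gcongr
        rw [le_div_iff₀ (by positivity), Nat.choose_symm_add]
        exact choose_mul_pow_le_one_add_pow hb.le _ _
    _ = (1 + b) ^ n * q ^ k := by
        rw [pow_add, div_pow, mul_pow]
        field_simp
    _ ≤ (1 + b) ^ n * q ^ (b * n) := by
        gcongr
        rw [← rpow_natCast]
        exact rpow_le_rpow_of_exponent_le hq hk
    _ = g b ^ n := by
        rw [g_eq_mul_rpow hb, mul_pow, ← rpow_natCast (q ^ b), ← rpow_mul (by positivity)]

lemma monotone_two_pow_mul_choose (n : ℕ) : Monotone fun j => 2 ^ j * (n + j).choose n :=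
  fun _ _ h => Nat.mul_le_mul (Nat.pow_le_pow_right two_pos h) (Nat.choose_le_choose n (by omega))

lemma floor_mul_le_of_g_pow_lt {b : ℝ} (hb : 0 < b) {n l : ℕ}
    (hl : g b ^ n < (2 ^ (l + 1) * (n + l + 1).choose n : ℝ)) : ⌊b * n⌋₊ ≤ l := by
  by_contra! h
  have hmono : (2 ^ (l + 1) * (n + l + 1).choose n : ℝ) ≤
      2 ^ ⌊b * n⌋₊ * (n + ⌊b * n⌋₊).choose n := by
    exact_mod_cast monotone_two_pow_mul_choose n h
  linarith [two_pow_mul_choose_le_g_pow hb (Nat.floor_le (by positivity : 0 ≤ b * n))]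

theorem coveringFunctional_Kp_le_general (p : ℝ) (hp : 1 ≤ p)
    (t : ℝ) (n : ℕ) (hn : 0 < n)
    (b : ℝ) (hb : 0 < b) (hgb : g b = t)
    (l : ℕ) (hl1 : (2 ^ l * (n + l).choose n : ℝ) ≤ t ^ n)
    (hl2 : t ^ n < (2 ^ (l + 1) * (n + l + 1).choose n : ℝ)) :
    coveringFunctional ⌊t ^ n⌋₊ (Kp n p) ≤ ((n : ℝ) / ((n : ℝ) + l)) ^ (1 / p) ∧
      ((n : ℝ) / ((n : ℝ) + l)) ^ (1 / p) ≤
        ((n : ℝ) / ((n : ℝ) + (⌊b * (n : ℝ)⌋₊ : ℝ))) ^ (1 / p) := by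
  have : Nonempty (Fin n) := ⟨⟨0, hn⟩⟩
  have hp0 : 0 < p := one_pos.trans_le hp
  have hcard : #(signedCentres (fun j => (j / (n + l : ℝ)) ^ (1 / p)) n l) ≤ ⌊t ^ n⌋₊ :=
    (card_signedCentres_le (by simp [hp0.ne']) n l).trans (Nat.le_floor (by exact_mod_cast hl1))
  have hfloor : (⌊b * n⌋₊ : ℝ) ≤ l := by
    exact_mod_cast floor_mul_le_of_g_pow_lt hb (hgb ▸ hl2)
  refine ⟨coveringFunctional_le_of_subset_add (by positivity) _ hcard
    (Kp_subset_signedCentres_add hn l hp), ?_⟩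
  gcongr

/-- Let `p ≥ 1`, `t ∈ (1,2]`, `n` a positive integer, `b = b(t)` the positive solution
of `g b = t`, and `l = l(n,t)` the nonnegative integer with
`2^l·C(n+l,n) ≤ t^n < 2^(l+1)·C(n+l+1,n)`. Then
`Γ_{⌊t^n⌋}(Kₙ^p) ≤ (n/(n+l))^(1/p) ≤ (n/(n+⌊b·n⌋))^(1/p)`. -/
theorem coveringFunctional_Kp_le (p : ℝ) (hp : 1 ≤ p)
    (t : ℝ) (ht1 : 1 < t) (ht2 : t ≤ 2) (n : ℕ) (hn : 0 < n)
    (b : ℝ) (hb : 0 < b) (hgb : g b = t)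
    (l : ℕ) (hl1 : (2 ^ l * (n + l).choose n : ℝ) ≤ t ^ n)
    (hl2 : t ^ n < (2 ^ (l + 1) * (n + l + 1).choose n : ℝ)) :
    coveringFunctional ⌊t ^ n⌋₊ (Kp n p) ≤ ((n : ℝ) / ((n : ℝ) + l)) ^ (1 / p) ∧
      ((n : ℝ) / ((n : ℝ) + l)) ^ (1 / p) ≤
        ((n : ℝ) / ((n : ℝ) + (⌊b * (n : ℝ)⌋₊ : ℝ))) ^ (1 / p) :=
  coveringFunctional_Kp_le_general p hp t n hn b hb hgb l hl1 hl2
end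

section
/- For every positive integer n and every p ≥ 1, Γ_{2^n}(Kₙ^{p*}) ≤ (n/(n+1))^{1/p} < 1. -/
open Real Set Pointwise

/-- `Kₙ^{p*}`: the portion of the `ℓ_p` unit ball in the nonnegative orthant. -/
noncomputable def Kpstar (n : ℕ) (p : ℝ) : Set (Fin n → ℝ) :=
  {x | (∑ i, x i ^ p) ≤ 1 ∧ ∀ i, 0 ≤ x i}

/-!
Cover `Kₙ^{p*}` by translates of `γ Kₙ^{p*}` centred at the `2ⁿ` vertices of the cube `[0, δ]ⁿ`,
where `δ^p = 1/(n+1)` and `γ^p = n/(n+1)`. For `x ∈ Kₙ^{p*}`, subtract the vertex whose nonzero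
coordinates are those with `xᵢ ≥ δ`; the remainder `z` is nonnegative. If no coordinate reaches `δ`,
then `∑ zᵢ^p < n δ^p`. Otherwise superadditivity of `t ↦ t^p` (for `p ≥ 1`) shows that each
subtracted `δ` lowers `∑ xᵢ^p` by at least `δ^p`, so `∑ zᵢ^p ≤ 1 - δ^p`. In both cases `z ∈ γ Kₙ^{p*}`.
-/

theorem coveringFunctional_le {n m : ℕ} {K C : Set (Fin n → ℝ)} {γ : ℝ} (hγ : 0 < γ)
    (hC : C.Finite) (hCm : C.ncard = m) (hKC : K ⊆ C + γ • K) :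
    coveringFunctional m K ≤ γ :=
  csInf_le ⟨0, fun _ hγ' => hγ'.1.le⟩ ⟨hγ, C, hC, hCm, hKC⟩

theorem mem_smul_Kpstar {n : ℕ} {p γ : ℝ} (hγ : 0 < γ) {z : Fin n → ℝ} (hz : ∀ i, 0 ≤ z i)
    (hsum : ∑ i, z i ^ p ≤ γ ^ p) : z ∈ γ • Kpstar n p := by
  refine ⟨γ⁻¹ • z, ⟨?_, fun i => by simpa using mul_nonneg (inv_nonneg.2 hγ.le) (hz i)⟩,
    smul_inv_smul₀ hγ.ne' z⟩
  have hγp : 0 < γ ^ p := rpow_pos_of_pos hγ p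
  calc ∑ i, (γ⁻¹ • z) i ^ p = (γ ^ p)⁻¹ * ∑ i, z i ^ p := by
        simp only [Pi.smul_apply, smul_eq_mul, Finset.mul_sum]
        exact Finset.sum_congr rfl fun i _ => by
          rw [mul_rpow (inv_nonneg.2 hγ.le) (hz i), inv_rpow hγ.le]
    _ ≤ 1 := by rw [inv_mul_le_one₀ hγp]; exact hsum

section CubeVertex

variable {n : ℕ} {δ : ℝ}

def cubeVertex (δ : ℝ) (S : Finset (Fin n)) : Fin n → ℝ := fun i => if i ∈ S then δ else 0

theorem cubeVertex_injective (hδ : δ ≠ 0) : Function.Injective (cubeVertex (n := n) δ) := by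
  intro S T hST
  ext i
  have := congrFun hST i
  by_cases hS : i ∈ S <;> by_cases hT : i ∈ T <;> simp_all [cubeVertex]

theorem ncard_range_cubeVertex (hδ : δ ≠ 0) : (range (cubeVertex (n := n) δ)).ncard = 2 ^ n := by
  rw [ncard_range_of_injective (cubeVertex_injective hδ), Nat.card_eq_fintype_card,
    Fintype.card_finset, Fintype.card_fin]

theorem sum_rpow_sub_cubeVertex_le {p : ℝ} (hp : 1 ≤ p) (hδ : 0 ≤ δ) {x : Fin n → ℝ}
    {S : Finset (Fin n)} (hS : ∀ i ∈ S, δ ≤ x i) :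
    ∑ i, (x i - cubeVertex δ S i) ^ p ≤ ∑ i, x i ^ p - S.card * δ ^ p := by
  have hcoord : ∀ i, (x i - cubeVertex δ S i) ^ p ≤ x i ^ p - if i ∈ S then δ ^ p else 0 := by
    intro i
    by_cases hi : i ∈ S
    · have := add_rpow_le_rpow_add (sub_nonneg.2 (hS i hi)) hδ hp
      simp only [cubeVertex, if_pos hi, sub_add_cancel] at this ⊢
      linarith
    · simp [cubeVertex, hi]
  calc ∑ i, (x i - cubeVertex δ S i) ^ p ≤ ∑ i, (x i ^ p - if i ∈ S then δ ^ p else 0) :=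
        Finset.sum_le_sum fun i _ => hcoord i
    _ = ∑ i, x i ^ p - S.card * δ ^ p := by
        rw [Finset.sum_sub_distrib, Finset.sum_ite_mem, Finset.univ_inter, Finset.sum_const,
          nsmul_eq_mul]

end CubeVertex

theorem Kpstar_subset_range_cubeVertex_add_smul {n : ℕ} {p δ γ : ℝ} (hp : 1 ≤ p) (hδ : 0 < δ)
    (hγ : 0 < γ) (hsmall : n * δ ^ p ≤ γ ^ p) (hlarge : 1 - δ ^ p ≤ γ ^ p) :
    Kpstar n p ⊆ range (cubeVertex δ) + γ • Kpstar n p := by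
  rintro x ⟨hx1, hx0⟩
  set S := Finset.univ.filter fun i => δ ≤ x i
  have hS : ∀ i, i ∈ S ↔ δ ≤ x i := by simp [S]
  have hz0 : ∀ i, 0 ≤ x i - cubeVertex δ S i := by
    intro i
    by_cases hi : i ∈ S
    · simpa [cubeVertex, hi] using (hS i).1 hi
    · simpa [cubeVertex, hi] using hx0 i
  have hzsum : ∑ i, (x i - cubeVertex δ S i) ^ p ≤ γ ^ p := by
    rcases S.eq_empty_or_nonempty with hSe | hSne
    · have hlt : ∀ i, x i < δ := fun i => not_le.1 fun h => by simpa [hSe] using (hS i).2 h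
      calc ∑ i, (x i - cubeVertex δ S i) ^ p = ∑ i, x i ^ p := by simp [cubeVertex, hSe]
        _ ≤ ∑ _i : Fin n, δ ^ p :=
            Finset.sum_le_sum fun i _ => rpow_le_rpow (hx0 i) (hlt i).le (by linarith)
        _ ≤ γ ^ p := by simpa using hsmall
    · calc ∑ i, (x i - cubeVertex δ S i) ^ p ≤ ∑ i, x i ^ p - S.card * δ ^ p :=
            sum_rpow_sub_cubeVertex_le hp hδ.le fun i => (hS i).1
        _ ≤ 1 - 1 * δ ^ p := by
            gcongr
            exact_mod_cast hSne.card_pos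
        _ ≤ γ ^ p := by simpa using hlarge
  exact ⟨cubeVertex δ S, mem_range_self S, _, mem_smul_Kpstar hγ hz0 hzsum,
    add_sub_cancel _ x⟩

/-- For every positive integer `n` and every `p ≥ 1`,
`Γ_{2^n}(Kₙ^{p*}) ≤ (n/(n+1))^(1/p) < 1`. -/
theorem coveringFunctional_two_pow_Kpstar (n : ℕ) (hn : 0 < n) (p : ℝ) (hp : 1 ≤ p) :
    coveringFunctional (2 ^ n) (Kpstar n p) ≤ ((n : ℝ) / ((n : ℝ) + 1)) ^ (1 / p) ∧
      ((n : ℝ) / ((n : ℝ) + 1)) ^ (1 / p) < 1 := by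
  have hn' : (0 : ℝ) < n := by exact_mod_cast hn
  have hp' : p ≠ 0 := by positivity
  have hratio : (n : ℝ) / (n + 1) < 1 := (div_lt_one (by positivity)).2 (lt_add_one _)
  set δ := (1 / ((n : ℝ) + 1)) ^ (1 / p)
  set γ := ((n : ℝ) / (n + 1)) ^ (1 / p)
  have hroot {a : ℝ} (ha : 0 ≤ a) : (a ^ (1 / p)) ^ p = a := by rw [one_div, rpow_inv_rpow ha hp']
  have hδp : δ ^ p = 1 / (n + 1) := hroot (by positivity)
  have hγp : γ ^ p = n / (n + 1) := hroot (by positivity)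
  have hδ : 0 < δ := by positivity
  have hγ : 0 < γ := by positivity
  refine ⟨coveringFunctional_le hγ (finite_range _) (ncard_range_cubeVertex hδ.ne')
    (Kpstar_subset_range_cubeVertex_add_smul hp hδ hγ ?_ ?_), rpow_lt_one (by positivity) hratio
    (by positivity)⟩
  · rw [hδp, hγp, mul_one_div]
  · rw [hδp, hγp, one_sub_div (by positivity), add_sub_cancel_right]
end
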